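/- arXiv:1505.06548 — 4 statements merged into one kernel-verified Lean document; each statement's English description precedes it below -/
import Mathlib

section
/- Let S = F_q[[t]] with q odd, and let F ∈ S[X_0, …, X_n] be a homogeneous polynomial of degree 2 which is a semistable family and whose generic fiber is a smooth quadric (i.e. the image F_K of F in K[X_0,…,X_n], K = F_q((t)), is a nondegenerate quadratic form). Then the total space {F = 0} ⊂ P^n_S is smooth (regular) at every F_q-rational point of the central fiber: for every a ∈ F_q^{n+1} \ {0} with F(a) ≡ 0 (mod t), it is not the case that both F(a) ∈ t²S and ∂F/∂X_i(a) ∈ tS for all i = 0, …, n. -/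
noncomputable section

open MvPolynomial

/-- The linear change of coordinates `X i ↦ ∑ j, M i j • X j` applied to a polynomial. -/
def changeCoords {R : Type} [CommRing R] {m : ℕ}
    (M : Matrix (Fin m) (Fin m) R) (F : MvPolynomial (Fin m) R) : MvPolynomial (Fin m) R :=
  aeval (fun i => ∑ j, C (M i j) * X j) F

/-- `MultGE t F w μ` says that for the weight system `w`, the multiplicity of `F` is at least
`μ`, i.e. `v_t(c_d) + ∑ j, w j * d j ≥ μ` for every monomial `c_d · X^d` of `F` (where `v_t`
is the `t`-adic valuation on the coefficients, expressed through divisibility by powers of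
`t`). -/
def MultGE {R : Type} [CommRing R] {m : ℕ} (t : R)
    (F : MvPolynomial (Fin m) R) (w : Fin m → ℤ) (μ : ℤ) : Prop :=
  ∀ d ∈ F.support, ∀ k : ℕ, (k : ℤ) ≤ μ - ∑ j, w j * (d j : ℤ) → t ^ k ∣ coeff d F

/-- Kollár's semistability for a family of degree-`δ` hypersurfaces over a discrete valuation
ring with uniformizer `t`: for every coordinate change with unit determinant over the DVR and
every weight system `W`, the multiplicity satisfies `mult_W F ≤ δ (∑ w_i) / m`
(`m` = number of variables). -/
def SemistableFamily {R : Type} [CommRing R] {m : ℕ} (t : R) (δ : ℕ)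
    (F : MvPolynomial (Fin m) R) : Prop :=
  ∀ M : Matrix (Fin m) (Fin m) R, IsUnit M.det →
    ∀ (w : Fin m → ℤ) (μ : ℤ), MultGE t (changeCoords M F) w μ →
      (m : ℤ) * μ ≤ (δ : ℤ) * ∑ j, w j

/-!
If `a` were a singular point, i.e. `t² ∣ F(a)` and `t ∣ ∂ᵢF(a)` for all `i`, complete `a` to a
matrix `M ∈ GL_{n+1}(S)` with `p`-th column `a` and put `G = F ∘ M`. The coefficient of `X_p²`
in `G` is `G(e_p) = F(a)`, divisible by `t²`, and for `q ≠ p` the coefficient of `X_p X_q` is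
`∂_q G(e_p) = ∑ᵢ M_{iq} ∂ᵢF(a)`, divisible by `t`. So for the weight system `w = -e_p` every
monomial of `G` has multiplicity `≥ 0`, while semistability demands `(n+1)·0 ≤ 2·(-1)`.
-/

theorem Finsupp.exists_eq_single_add_single_of_degree_eq_two {σ : Type*} {d : σ →₀ ℕ}
    (hd : d.degree = 2) : ∃ r s, d = single r 1 + single s 1 := by
  classical
  obtain ⟨r, s, hrs⟩ := Multiset.card_eq_two.mp (by rwa [card_toMultiset] : d.toMultiset.card = 2)
  refine ⟨r, s, ?_⟩
  rw [← toMultiset_toFinsupp d, hrs, Multiset.insert_eq_cons, ← Multiset.singleton_add,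
    Multiset.toFinsupp_add, Multiset.toFinsupp_singleton, Multiset.toFinsupp_singleton]

namespace MvPolynomial

variable {R σ : Type*} [CommRing R]

theorem IsHomogeneous.degree_eq {G : MvPolynomial σ R} {N : ℕ} (hG : G.IsHomogeneous N)
    {d : σ →₀ ℕ} (hd : d ∈ G.support) : d.degree = N :=
  (hG.degree_eq_sum_deg_support hd).symm

theorem IsHomogeneous.coeff_single_eq_eval [Fintype σ] [DecidableEq σ] {G : MvPolynomial σ R}
    {N : ℕ} (hG : G.IsHomogeneous N) (p : σ) :
    coeff (Finsupp.single p N) G = eval (Pi.single p 1) G := by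
  rw [eval_eq', Finset.sum_eq_single (Finsupp.single p N)]
  · rw [Finset.prod_eq_one fun i _ => ?_, mul_one]
    rcases eq_or_ne i p with rfl | hi
    · rw [Pi.single_eq_same, one_pow]
    · rw [Finsupp.single_eq_of_ne hi, pow_zero]
  · intro d hd hne
    obtain ⟨i, hip, hi⟩ : ∃ i, i ≠ p ∧ d i ≠ 0 := by
      by_contra! h
      have hd_single : d = Finsupp.single p (d p) := by
        ext i
        rcases eq_or_ne i p with rfl | hi
        · simp
        · rw [h i hi, Finsupp.single_eq_of_ne hi]
      have hdp : d p = N := by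
        rw [← hG.degree_eq hd, hd_single, Finsupp.degree_single, Finsupp.single_eq_same]
      exact hne (hdp ▸ hd_single)
    rw [Finset.prod_eq_zero (Finset.mem_univ i) (by simp [Pi.single_eq_of_ne hip, hi]), mul_zero]
  · intro h
    rw [notMem_support_iff.mp h, zero_mul]

theorem IsHomogeneous.coeff_single_add_single_eq_eval_pderiv [Fintype σ] [DecidableEq σ]
    {G : MvPolynomial σ R} {N : ℕ} (hG : G.IsHomogeneous (N + 1)) {p q : σ} (hpq : p ≠ q) :
    coeff (Finsupp.single p N + Finsupp.single q 1) G = eval (Pi.single p 1) (pderiv q G) := by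
  have hG' : (pderiv q G).IsHomogeneous N := hG.pderiv
  rw [← hG'.coeff_single_eq_eval, coeff_pderiv, Finsupp.single_eq_of_ne hpq.symm]
  simp

theorem pderiv_aeval [Fintype σ] {τ : Type*} (g : σ → MvPolynomial τ R) (F : MvPolynomial σ R)
    (j : τ) : pderiv j (aeval g F) = ∑ i, aeval g (pderiv i F) * pderiv j (g i) := by
  classical
  induction F using MvPolynomial.induction_on with
  | C a => simp
  | add P Q hP hQ => simp only [map_add, hP, hQ, add_mul, Finset.sum_add_distrib]
  | mul_X P i hP =>
    simp only [map_mul, aeval_X, Derivation.leibniz, hP, pderiv_X, smul_eq_mul, Finset.mul_sum]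
    simp [Pi.single_apply, add_mul, Finset.sum_add_distrib, mul_assoc, apply_ite (bind₁ g)]

end MvPolynomial

theorem Matrix.det_updateCol_one {R n : Type*} [CommRing R] [Fintype n] [DecidableEq n] (j : n)
    (v : n → R) : (updateCol (1 : Matrix n n R) j v).det = v j := by
  simpa [one_apply] using det_updateCol_sum (1 : Matrix n n R) j v

open MvPolynomial Matrix

variable {R : Type} [CommRing R] {m : ℕ}

theorem eval_changeCoords (M : Matrix (Fin m) (Fin m) R) (F : MvPolynomial (Fin m) R)
    (x : Fin m → R) : eval x (changeCoords M F) = eval (M *ᵥ x) F := by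
  rw [changeCoords, aeval_def, algebraMap_eq, eval₂_comp_left (eval x) C _ F]
  congr 1
  · ext r : 2
    simp
  · ext i
    simp [mulVec, dotProduct]

theorem eval_pderiv_changeCoords (M : Matrix (Fin m) (Fin m) R) (F : MvPolynomial (Fin m) R)
    (x : Fin m → R) (j : Fin m) :
    eval x (pderiv j (changeCoords M F)) = ∑ i, eval (M *ᵥ x) (pderiv i F) * M i j := by
  rw [changeCoords, pderiv_aeval, map_sum]
  refine Finset.sum_congr rfl fun i _ => ?_
  rw [map_mul, ← changeCoords, eval_changeCoords]
  simp [pderiv_X, Pi.single_apply]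

theorem MvPolynomial.IsHomogeneous.changeCoords {F : MvPolynomial (Fin m) R} {N : ℕ}
    (hF : F.IsHomogeneous N) (M : Matrix (Fin m) (Fin m) R) :
    (_root_.changeCoords M F).IsHomogeneous N := by
  have h := hF.aeval (fun i => ∑ j, C (M i j) * X j) fun i =>
    IsHomogeneous.sum Finset.univ _ 1 fun j _ => (isHomogeneous_X R j).C_mul (M i j)
  rwa [one_mul] at h

theorem multGE_neg_single_of_dvd_coeff {t : R} {G : MvPolynomial (Fin m) R}
    (hG : G.IsHomogeneous 2) (p : Fin m) (h2 : t ^ 2 ∣ coeff (Finsupp.single p 2) G)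
    (h1 : ∀ q ≠ p, t ∣ coeff (Finsupp.single p 1 + Finsupp.single q 1) G) :
    MultGE t G (-Pi.single p 1) 0 := by
  intro d hd k hk
  have hkd : k ≤ d p := by
    have : ∑ j, (-Pi.single p 1 : Fin m → ℤ) j * d j = -d p := by simp [Pi.single_apply]
    omega
  refine (pow_dvd_pow t hkd).trans ?_
  obtain ⟨r, s, rfl⟩ := Finsupp.exists_eq_single_add_single_of_degree_eq_two (hG.degree_eq hd)
  rcases eq_or_ne p r with rfl | hr <;> rcases eq_or_ne p s with rfl | hs
  · simpa [← Finsupp.single_add] using h2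
  · simpa [Finsupp.single_eq_of_ne hs] using h1 s hs.symm
  · simpa [Finsupp.single_eq_of_ne hr, add_comm] using h1 r hr.symm
  · simp [Finsupp.single_eq_of_ne hr, Finsupp.single_eq_of_ne hs]

theorem SemistableFamily.not_sq_dvd_eval_and_dvd_pderiv {t : R} {F : MvPolynomial (Fin m) R}
    (hss : SemistableFamily t 2 F) (hF : F.IsHomogeneous 2) {M : Matrix (Fin m) (Fin m) R}
    (hM : IsUnit M.det) (p : Fin m) :
    ¬ (t ^ 2 ∣ eval (M.col p) F ∧ ∀ i, t ∣ eval (M.col p) (pderiv i F)) := by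
  rintro ⟨h2, h1⟩
  have hG := hF.changeCoords M
  have hmult : MultGE t (changeCoords M F) (-Pi.single p 1) 0 := by
    refine multGE_neg_single_of_dvd_coeff hG p ?_ fun q hqp => ?_
    · rwa [hG.coeff_single_eq_eval, eval_changeCoords, mulVec_single_one]
    · rw [hG.coeff_single_add_single_eq_eval_pderiv hqp.symm, eval_pderiv_changeCoords,
        mulVec_single_one]
      exact Finset.dvd_sum fun i _ => (h1 i).mul_right _
  simpa using hss M hM _ _ hmult

theorem semistable_quadric_regular_at_rational_points_general
    (Fq : Type) [Field Fq]
    (n : ℕ)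
    (F : MvPolynomial (Fin (n + 1)) (PowerSeries Fq))
    (hhom : F.IsHomogeneous 2)
    (hss : SemistableFamily (PowerSeries.X : PowerSeries Fq) 2 F)
    (a : Fin (n + 1) → Fq) (ha : a ≠ 0) :
    ¬ ((PowerSeries.X : PowerSeries Fq) ^ 2 ∣ eval (fun i => PowerSeries.C (a i)) F ∧
      ∀ i, (PowerSeries.X : PowerSeries Fq) ∣
        eval (fun j => PowerSeries.C (a j)) (pderiv i F)) := by
  obtain ⟨p, hp⟩ := Function.ne_iff.mp ha
  set M := updateCol 1 p fun i => PowerSeries.C (a i)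
  have hM : IsUnit M.det := by
    rw [det_updateCol_one]
    exact (isUnit_iff_ne_zero.mpr hp).map _
  have hcol : M.col p = fun i => PowerSeries.C (a i) := by ext i; simp [M]
  simpa [hcol] using hss.not_sq_dvd_eval_and_dvd_pderiv hhom hM p

/-- Let `S = F_q[[t]]` with `q` odd, and let `F` be a semistable family of
quadrics over `S` whose generic fiber is a smooth quadric over `F_q((t))`.  Then the total
space `{F = 0} ⊂ P^n_S` is regular at each `F_q`-point of the central fiber: for every
nonzero `a ∈ F_q^{n+1}` with `F(a) ≡ 0 (mod t)`, it is not the case that both `F(a) ∈ t²S`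
and all partial derivatives `∂F/∂X_i(a) ∈ tS`. -/
theorem semistable_quadric_regular_at_rational_points
    (Fq : Type) [Field Fq] [Fintype Fq] (hq : Odd (Fintype.card Fq))
    (n : ℕ)
    (F : MvPolynomial (Fin (n + 1)) (PowerSeries Fq))
    (hhom : F.IsHomogeneous 2)
    (hss : SemistableFamily (PowerSeries.X : PowerSeries Fq) 2 F)
    (hgeneric : ∀ a : Fin (n + 1) → LaurentSeries Fq,
      (∀ i, eval a (pderiv i (MvPolynomial.map
        (algebraMap (PowerSeries Fq) (LaurentSeries Fq)) F)) = 0) → a = 0)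
    (a : Fin (n + 1) → Fq) (ha : a ≠ 0)
    (hcentral : (PowerSeries.X : PowerSeries Fq) ∣
      eval (fun i => PowerSeries.C (a i)) F) :
    ¬ ((PowerSeries.X : PowerSeries Fq) ^ 2 ∣ eval (fun i => PowerSeries.C (a i)) F ∧
      ∀ i, (PowerSeries.X : PowerSeries Fq) ∣
        eval (fun j => PowerSeries.C (a j)) (pderiv i F)) :=
  semistable_quadric_regular_at_rational_points_general Fq n F hhom hss a ha
end
end

section
/- Let S = F_q[[t]] with q odd, n ≥ 5, and let Q, Q' ∈ S[X_0, …, X_n] be homogeneous of degree 2 forming a semistable pencil whose generic fiber {Q_K = Q'_K = 0} ⊂ P^n_K (K = F_q((t))) is a smooth complete intersection of two quadrics. Let Q_0, Q_0' be the reductions of Q, Q' modulo t. Then for every (λ, μ) ∈ F_q² \ {(0,0)}, the quadratic form λQ_0 + μQ_0' has no linear factor with coefficients in F_q. -/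
noncomputable section

open MvPolynomial

/-- The Plücker coordinate `a_{IJ}` of the wedge `F ∧ G` of two polynomials, in the basis of
wedges of monomials. -/
def wedgeCoeff {R : Type} [CommRing R] {m : ℕ}
    (F G : MvPolynomial (Fin m) R) (I J : (Fin m) →₀ ℕ) : R :=
  coeff I F * coeff J G - coeff J F * coeff I G

/-- `PencilMultGE t F G w μ` says the multiplicity of the pencil spanned by `F, G` at the
weight system `w` is at least `μ`: for every pair `I ≠ J` with `a_{IJ} ≠ 0` one has
`v_t(a_{IJ}) + ∑ j, w j * (I j + J j) ≥ μ`. -/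
def PencilMultGE {R : Type} [CommRing R] {m : ℕ} (t : R)
    (F G : MvPolynomial (Fin m) R) (w : Fin m → ℤ) (μ : ℤ) : Prop :=
  ∀ I J : (Fin m) →₀ ℕ, I ≠ J → wedgeCoeff F G I J ≠ 0 →
    ∀ k : ℕ, (k : ℤ) ≤ μ - ∑ j, w j * ((I j : ℤ) + (J j : ℤ)) → t ^ k ∣ wedgeCoeff F G I J

/-- Kollár-style semistability for a pencil of degree-`δ` forms over a discrete valuation ring
with uniformizer `t`: for every coordinate change with unit determinant over the DVR and every
weight system `W`, `mult_W (F, G) ≤ 2δ(∑ w_i)/m`. -/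
def PencilSemistable {R : Type} [CommRing R] {m : ℕ} (t : R) (δ : ℕ)
    (F G : MvPolynomial (Fin m) R) : Prop :=
  ∀ M : Matrix (Fin m) (Fin m) R, IsUnit M.det →
    ∀ (w : Fin m → ℤ) (μ : ℤ),
      PencilMultGE t (changeCoords M F) (changeCoords M G) w μ →
      (m : ℤ) * μ ≤ 2 * (δ : ℤ) * ∑ j, w j

/-- The canonical map from `F_q[[t]]` to a fixed algebraic closure of `F_q((t))`. -/
def toOmega (Fq : Type) [Field Fq] :
    PowerSeries Fq →+* AlgebraicClosure (LaurentSeries Fq) :=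
  (algebraMap (LaurentSeries Fq) (AlgebraicClosure (LaurentSeries Fq))).comp
    (algebraMap (PowerSeries Fq) (LaurentSeries Fq))

/-- The generic fiber of the pencil `{Q = Q' = 0}` over `F_q((t))` is a smooth complete
intersection of two quadrics: `Q_K, Q'_K` are linearly independent and the Jacobian matrix of
`(Q, Q')` has rank `2` (linearly independent gradients) at every nontrivial common zero over
an algebraic closure of `F_q((t))`. -/
def SmoothCIGenericFiber (Fq : Type) [Field Fq] {m : ℕ}
    (Q Q' : MvPolynomial (Fin m) (PowerSeries Fq)) : Prop :=
  LinearIndependent (LaurentSeries Fq)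
    ![MvPolynomial.map (algebraMap (PowerSeries Fq) (LaurentSeries Fq)) Q,
      MvPolynomial.map (algebraMap (PowerSeries Fq) (LaurentSeries Fq)) Q'] ∧
  ∀ a : Fin m → AlgebraicClosure (LaurentSeries Fq), a ≠ 0 →
    eval a (MvPolynomial.map (toOmega Fq) Q) = 0 →
    eval a (MvPolynomial.map (toOmega Fq) Q') = 0 →
    LinearIndependent (AlgebraicClosure (LaurentSeries Fq))
      ![fun i => eval a (pderiv i (MvPolynomial.map (toOmega Fq) Q)),
        fun i => eval a (pderiv i (MvPolynomial.map (toOmega Fq) Q'))]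

/-!
If a linear form `L` divides a member `λQ₀ + μQ₀'` of the reduced pencil, change coordinates
over `F_q` so that `L = X_i`. On the monomials not involving `X_i` the reductions of the two forms
then have proportional coefficient vectors, so every Plücker coordinate `a_{IJ}` with
`I_i = J_i = 0` is divisible by `t`. Thus the pencil has multiplicity at least `1` for the weight
system `e_i`, and semistability forces `n + 1 ≤ 2 · 2`, which fails for `n ≥ 5`.
-/

section ChangeCoords

open Matrix

variable {R : Type} [CommRing R] {m : ℕ}

lemma changeCoords_sum_smul_X (M : Matrix (Fin m) (Fin m) R) (c : Fin m → R) :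
    changeCoords M (∑ i, c i • X i) = ∑ j, (c ᵥ* M) j • X j := by
  simp only [changeCoords, map_sum, map_smul, aeval_X]
  simp only [Finset.smul_sum, smul_eq_C_mul]
  rw [Finset.sum_comm]
  refine Finset.sum_congr rfl fun j _ => ?_
  simp only [vecMul, dotProduct, map_sum, Finset.sum_mul, ← mul_assoc, ← C_mul]

lemma changeCoords_C_mul_add_C_mul (M : Matrix (Fin m) (Fin m) R) (a b : R)
    (F G : MvPolynomial (Fin m) R) :
    changeCoords M (C a * F + C b * G) = C a * changeCoords M F + C b * changeCoords M G := by
  simp [changeCoords, algebraMap_eq]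

lemma map_changeCoords {S : Type} [CommRing S] (φ : R →+* S) (M : Matrix (Fin m) (Fin m) R)
    (F : MvPolynomial (Fin m) R) :
    map φ (changeCoords M F) = changeCoords (M.map φ) (map φ F) := by
  induction F using MvPolynomial.induction_on <;> simp_all [changeCoords, algebraMap_eq]

lemma map_constantCoeff_changeCoords_map_C (B : Matrix (Fin m) (Fin m) R)
    (F : MvPolynomial (Fin m) (PowerSeries R)) :
    map PowerSeries.constantCoeff (changeCoords (B.map PowerSeries.C) F)
      = changeCoords B (map PowerSeries.constantCoeff F) := by
  have hB : (B.map PowerSeries.C).map PowerSeries.constantCoeff = B := by ext; simp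
  rw [map_changeCoords, hB]

lemma det_one_updateRow (i : Fin m) (c : Fin m → R) :
    ((1 : Matrix (Fin m) (Fin m) R).updateRow i c).det = c i := by
  have hc : ∑ k, c k • (1 : Matrix (Fin m) (Fin m) R) k = c := by
    ext j; simp [one_apply]
  simpa [hc] using det_updateRow_sum (1 : Matrix (Fin m) (Fin m) R) i c

lemma exists_isUnit_det_changeCoords_eq_X {K : Type} [Field K] {L : MvPolynomial (Fin m) K}
    (hL : L.IsHomogeneous 1) (hL0 : L ≠ 0) :
    ∃ (B : Matrix (Fin m) (Fin m) K) (i : Fin m), IsUnit B.det ∧ changeCoords B L = X i := by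
  obtain ⟨c, rfl⟩ : ∃ c : Fin m → K, ∑ i, c i • X i = L := by
    rw [← Submodule.mem_span_range_iff_exists_fun, ← homogeneousSubmodule_one_eq_span_X]
    exact hL
  obtain ⟨i, hi⟩ : ∃ i, c i ≠ 0 := by
    by_contra! h
    simp [h] at hL0
  set A := (1 : Matrix (Fin m) (Fin m) K).updateRow i c
  have hA : IsUnit A.det := by rw [det_one_updateRow]; exact hi.isUnit
  refine ⟨A⁻¹, i, isUnit_nonsing_inv_det A hA, ?_⟩
  have hc : c = Pi.single i 1 ᵥ* A := by rw [single_one_vecMul]; ext; simp [A]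
  rw [changeCoords_sum_smul_X, hc, vecMul_vecMul, mul_nonsing_inv A hA, vecMul_one]
  simp [Pi.single_apply]

end ChangeCoords

lemma coeff_eq_zero_of_X_dvd {σ R : Type*} [CommSemiring R] {p : MvPolynomial σ R} {i : σ}
    (h : X i ∣ p) {I : σ →₀ ℕ} (hI : I i = 0) : coeff I p = 0 := by
  classical
  obtain ⟨q, rfl⟩ := h
  simp [coeff_X_mul', hI]

section Pencil

variable {R : Type} [CommRing R] {m : ℕ}

lemma wedgeCoeff_map {S : Type} [CommRing S] (φ : R →+* S) (F G : MvPolynomial (Fin m) R)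
    (I J : Fin m →₀ ℕ) :
    φ (wedgeCoeff F G I J) = wedgeCoeff (map φ F) (map φ G) I J := by
  simp [wedgeCoeff, coeff_map]

lemma wedgeCoeff_eq_zero_of_X_dvd [IsDomain R] {F G : MvPolynomial (Fin m) R} {a b : R}
    (hab : (a, b) ≠ (0, 0)) {i : Fin m} (h : X i ∣ C a * F + C b * G)
    {I J : Fin m →₀ ℕ} (hI : I i = 0) (hJ : J i = 0) : wedgeCoeff F G I J = 0 := by
  have eI := coeff_eq_zero_of_X_dvd h hI
  have eJ := coeff_eq_zero_of_X_dvd h hJ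
  simp only [coeff_add, coeff_C_mul] at eI eJ
  have ha : a * wedgeCoeff F G I J = 0 := by
    rw [wedgeCoeff]; linear_combination coeff J G * eI - coeff I G * eJ
  have hb : b * wedgeCoeff F G I J = 0 := by
    rw [wedgeCoeff]; linear_combination coeff I F * eJ - coeff J F * eI
  by_contra hw
  exact hab (by simp_all)

lemma pencilMultGE_single_one {t : R} {F G : MvPolynomial (Fin m) R} {i : Fin m}
    (h : ∀ I J : Fin m →₀ ℕ, I i = 0 → J i = 0 → t ∣ wedgeCoeff F G I J) :
    PencilMultGE t F G (Pi.single i 1) 1 := by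
  intro I J _ _ k hk
  simp only [Pi.single_apply, ite_mul, one_mul, zero_mul, Finset.sum_ite_eq', Finset.mem_univ,
    if_true] at hk
  obtain rfl | rfl : k = 0 ∨ k = 1 := by omega
  · simp
  · simpa using h I J (by omega) (by omega)

lemma pencilMultGE_of_X_dvd_reduction [IsDomain R] {F G : MvPolynomial (Fin m) (PowerSeries R)}
    {a b : R} (hab : (a, b) ≠ (0, 0)) {i : Fin m}
    (h : X i ∣ C a * map PowerSeries.constantCoeff F + C b * map PowerSeries.constantCoeff G) :
    PencilMultGE PowerSeries.X F G (Pi.single i 1) 1 :=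
  pencilMultGE_single_one fun I J hI hJ => by
    rw [PowerSeries.X_dvd_iff, wedgeCoeff_map]
    exact wedgeCoeff_eq_zero_of_X_dvd hab h hI hJ

lemma PencilSemistable.le_two_mul_of_pencilMultGE_single_one {t : R} {δ : ℕ}
    {F G : MvPolynomial (Fin m) R} (hss : PencilSemistable t δ F G)
    {M : Matrix (Fin m) (Fin m) R} (hM : IsUnit M.det) {i : Fin m}
    (h : PencilMultGE t (changeCoords M F) (changeCoords M G) (Pi.single i 1) 1) :
    m ≤ 2 * δ := by
  have := hss M hM _ 1 h
  simp only [Finset.sum_pi_single', Finset.mem_univ, if_true, mul_one] at this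
  exact_mod_cast this

end Pencil

theorem semistable_pencil_central_fiber_no_rational_linear_factor_general
    (Fq : Type) [Field Fq]
    (n : ℕ) (hn : 5 ≤ n)
    (Q Q' : MvPolynomial (Fin (n + 1)) (PowerSeries Fq))
    (hss : PencilSemistable (PowerSeries.X : PowerSeries Fq) 2 Q Q') :
    ∀ l m : Fq, (l, m) ≠ (0, 0) →
      ¬ ∃ L : MvPolynomial (Fin (n + 1)) Fq, L.IsHomogeneous 1 ∧ L ≠ 0 ∧
        L ∣ (C l * MvPolynomial.map ((PowerSeries.constantCoeff : PowerSeries Fq →+* Fq)) Q +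
             C m * MvPolynomial.map ((PowerSeries.constantCoeff : PowerSeries Fq →+* Fq)) Q') := by
  rintro l m hlm ⟨L, hL, hL0, hdvd⟩
  obtain ⟨B, i, hB, hBL⟩ := exists_isUnit_det_changeCoords_eq_X hL hL0
  set M := B.map PowerSeries.C
  have hM : IsUnit M.det := by
    simpa only [RingHom.map_det, RingHom.mapMatrix_apply] using hB.map PowerSeries.C
  have hX : X i ∣ C l * map PowerSeries.constantCoeff (changeCoords M Q)
      + C m * map PowerSeries.constantCoeff (changeCoords M Q') := by
    rw [map_constantCoeff_changeCoords_map_C, map_constantCoeff_changeCoords_map_C,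
      ← changeCoords_C_mul_add_C_mul, ← hBL]
    exact map_dvd (aeval _) hdvd
  have hcard := hss.le_two_mul_of_pencilMultGE_single_one hM
    (pencilMultGE_of_X_dvd_reduction hlm hX)
  omega

/-- For a semistable pencil of quadrics over `F_q[[t]]` (`q` odd, `n ≥ 5`)
whose generic fiber is a smooth complete intersection of two quadrics, no member of the pencil
of reductions `λQ₀ + μQ₀'` has a linear factor with coefficients in `F_q`. -/
theorem semistable_pencil_central_fiber_no_rational_linear_factor
    (Fq : Type) [Field Fq] [Fintype Fq] (hq : Odd (Fintype.card Fq))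
    (n : ℕ) (hn : 5 ≤ n)
    (Q Q' : MvPolynomial (Fin (n + 1)) (PowerSeries Fq))
    (hQ : Q.IsHomogeneous 2) (hQ' : Q'.IsHomogeneous 2)
    (hss : PencilSemistable (PowerSeries.X : PowerSeries Fq) 2 Q Q')
    (hsmooth : SmoothCIGenericFiber Fq Q Q') :
    ∀ l m : Fq, (l, m) ≠ (0, 0) →
      ¬ ∃ L : MvPolynomial (Fin (n + 1)) Fq, L.IsHomogeneous 1 ∧ L ≠ 0 ∧
        L ∣ (C l * MvPolynomial.map ((PowerSeries.constantCoeff : PowerSeries Fq →+* Fq)) Q +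
             C m * MvPolynomial.map ((PowerSeries.constantCoeff : PowerSeries Fq →+* Fq)) Q') :=
  semistable_pencil_central_fiber_no_rational_linear_factor_general Fq n hn Q Q' hss
end
end

section
/- Let K be a field, L/K a Galois field extension of degree 2, and F ∈ K[X_0, …, X_m] (m ≥ 1) a cubic form. If F has a nontrivial zero in L^{m+1}, then F has a nontrivial zero in K^{m+1}. (In particular, a cubic hypersurface over K with a rational point over a quadratic Galois extension of K has a K-rational point.) -/
/-!
Let `σ` generate `Gal(L/K)` and let `a` be a nontrivial zero of `F` over `L`. Then `σ a` is a zero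
as well, so the binary cubic `q(s, t) = F(s a + t σa)` vanishes at `(1, 0)` and `(0, 1)`, i.e.
`q = s t (c₁ s + c₂ t)`, and the symmetry `σ (q (s, t)) = q (σ t, σ s)` forces `σ c₁ = c₂`.
Choosing `s ≠ 0` with `c₁ s ∈ K`, the point `(s, -σ s)` is the third zero of `q`, and
`w = s a - σs σa` satisfies `σ w = -w`; if `w = 0`, then `σ a = (s / σ s) a` instead.
A nontrivial zero `u` with `σ u = μ u` descends to `K`: `u / u i` is fixed by `σ`.
-/

open MvPolynomial

namespace MvPolynomial.IsHomogeneous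

variable {ι R S : Type*} [CommSemiring R]

theorem aeval_smul [CommSemiring S] [Algebra R S] {F : MvPolynomial ι R} {n : ℕ}
    (hF : F.IsHomogeneous n) (r : S) (x : ι → S) :
    MvPolynomial.aeval (r • x) F = r ^ n * MvPolynomial.aeval x F := by
  simp only [aeval_def, eval₂_eq, Finset.mul_sum]
  refine Finset.sum_congr rfl fun d hd => ?_
  rw [hF.degree_eq_sum_deg_support hd]
  simp only [Pi.smul_apply, smul_eq_mul, mul_pow, Finset.prod_mul_distrib,
    Finset.prod_pow_eq_pow_sum]
  ring

theorem eval_fin_two {P : MvPolynomial (Fin 2) R} {n : ℕ} (hP : P.IsHomogeneous n) (s t : R) :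
    eval ![s, t] P = ∑ k ∈ Finset.range (n + 1),
      coeff (Finsupp.single 0 (n - k) + Finsupp.single 1 k) P * s ^ (n - k) * t ^ k := by
  set e : ℕ → Fin 2 →₀ ℕ := fun k => Finsupp.single 0 (n - k) + Finsupp.single 1 k
  have he0 (k : ℕ) : e k 0 = n - k := by simp [e]
  have he1 (k : ℕ) : e k 1 = k := by simp [e]
  have hsupp : P.support ⊆ (Finset.range (n + 1)).image e := by
    intro d hd
    have hdeg : d 0 + d 1 = n := by
      rw [hP.degree_eq_sum_deg_support hd, ← Finsupp.degree_apply, Finsupp.degree_eq_sum,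
        Fin.sum_univ_two]
    refine Finset.mem_image.mpr ⟨d 1, Finset.mem_range.mpr (by omega), ?_⟩
    ext i
    fin_cases i
    · simp [he0]; omega
    · simp [he1]
  calc eval ![s, t] P = ∑ d ∈ P.support, coeff d P * (s ^ d 0 * t ^ d 1) := by
        simp [eval_eq', Fin.prod_univ_two]
    _ = ∑ d ∈ (Finset.range (n + 1)).image e, coeff d P * (s ^ d 0 * t ^ d 1) :=
        Finset.sum_subset hsupp fun d _ hd => by rw [notMem_support_iff.mp hd, zero_mul]
    _ = _ := by
        rw [Finset.sum_image fun k _ l _ hkl => by rw [← he1 k, hkl, he1]]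
        simp only [he0, he1, mul_assoc]
        rfl

theorem exists_aeval_smul_add_smul_eq [CommRing S] [Algebra R S] {F : MvPolynomial ι R}
    (hF : F.IsHomogeneous 3) {a b : ι → S}
    (ha : MvPolynomial.aeval a F = 0) (hb : MvPolynomial.aeval b F = 0) :
    ∃ c₁ c₂ : S, ∀ s t : S,
      MvPolynomial.aeval (s • a + t • b) F = s * t * (c₁ * s + c₂ * t) := by
  set P : MvPolynomial (Fin 2) S :=
    MvPolynomial.aeval (fun j => C (a j) * X 0 + C (b j) * X 1) F
  have hP : P.IsHomogeneous 3 := by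
    simpa using hF.aeval _ fun j => (isHomogeneous_C_mul_X _ _).add (isHomogeneous_C_mul_X _ _)
  have hPeval (s t : S) : MvPolynomial.aeval (s • a + t • b) F = ∑ k ∈ Finset.range 4,
      coeff (Finsupp.single 0 (3 - k) + Finsupp.single 1 k) P * s ^ (3 - k) * t ^ k := by
    rw [← hP.eval_fin_two, map_aeval, aeval_eq_eval₂Hom]
    congr 2
    · exact RingHom.ext fun r => by
        rw [RingHom.comp_apply, MvPolynomial.algebraMap_apply, eval_C]
    · funext j; simp [mul_comm]
  refine ⟨coeff (Finsupp.single 0 2 + Finsupp.single 1 1) P,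
    coeff (Finsupp.single 0 1 + Finsupp.single 1 2) P, fun s t => ?_⟩
  have h₀ : coeff (Finsupp.single 0 3) P = 0 := by
    simpa [Finset.sum_range_succ, ha, eq_comm] using hPeval 1 0
  have h₃ : coeff (Finsupp.single 1 3) P = 0 := by
    simpa [Finset.sum_range_succ, hb, eq_comm] using hPeval 0 1
  simp only [hPeval, Finset.sum_range_succ, Finset.sum_range_zero, Nat.reduceSub,
    Finsupp.single_zero, add_zero, zero_add, h₀, h₃]
  ring

end MvPolynomial.IsHomogeneous

namespace AlgEquiv

variable {K L : Type*} [Field K] [Field L] [Algebra K L] (σ : L ≃ₐ[K] L)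

/-- For `q (s, t) = s t (c₁ s + c₂ t)`, the hypothesis reads `σ (q (1, y)) = q (σ y, 1)`. -/
theorem apply_eq_of_forall_apply_mul_eq (hσ1 : σ ≠ 1) {c₁ c₂ : L}
    (h : ∀ y, σ (y * (c₁ + c₂ * y)) = σ y * (c₁ * σ y + c₂)) : σ c₁ = c₂ := by
  obtain ⟨θ, hθ⟩ : ∃ θ, σ θ ≠ θ := by
    by_contra! hθ
    exact hσ1 (AlgEquiv.ext hθ)
  have hθ0 : σ θ ≠ 0 := fun h0 => hθ (by rw [h0, (map_eq_zero_iff σ σ.injective).mp h0])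
  have hθ1 : σ θ ≠ 1 := fun h1 => hθ (by rw [h1, (map_eq_one_iff σ σ.injective).mp h1])
  have h₁ := h 1
  have h₂ := h θ
  simp only [map_mul, map_add, map_one, one_mul, mul_one] at h₁ h₂
  have h₃ : σ c₁ + σ c₂ * σ θ = c₁ * σ θ + c₂ := mul_left_cancel₀ hθ0 h₂
  have h₄ : (σ c₂ - c₁) * (σ θ - 1) = 0 := by linear_combination h₃ - h₁
  have h₅ : σ c₂ = c₁ := by
    rcases mul_eq_zero.mp h₄ with h | h
    · exact sub_eq_zero.mp h
    · exact absurd (sub_eq_zero.mp h) hθ1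
  linear_combination h₁ - h₅

theorem exists_ne_zero_apply_mul_eq (hσσ : ∀ x, σ (σ x) = x) (c : L) :
    ∃ s ≠ 0, σ (c * s) = c * s := by
  rcases eq_or_ne c 0 with rfl | hc
  · exact ⟨1, one_ne_zero, by simp⟩
  · exact ⟨σ c, by simpa using hc, by rw [map_mul, hσσ, mul_comm]⟩

end AlgEquiv

theorem IsGalois.exists_involution_of_finrank_eq_two {K L : Type*} [Field K] [Field L]
    [Algebra K L] [IsGalois K L] (h : Module.finrank K L = 2) :
    ∃ σ : L ≃ₐ[K] L, σ ≠ 1 ∧ (∀ x, σ (σ x) = x) ∧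
      ∀ x, σ x = x → x ∈ Set.range (algebraMap K L) := by
  have : FiniteDimensional K L := Module.finite_of_finrank_eq_succ h
  have hcard : Nat.card (L ≃ₐ[K] L) = 2 := by rw [IsGalois.card_aut_eq_finrank, h]
  obtain ⟨σ, hσ1, hσ⟩ := (Nat.card_eq_two_iff' 1).mp hcard
  refine ⟨σ, hσ1, fun x => ?_, fun x hx => ?_⟩
  · have h2 : σ ^ 2 = 1 := hcard ▸ pow_card_eq_one'
    simpa [sq] using DFunLike.congr_fun h2 x
  · refine (IsGalois.mem_range_algebraMap_iff_fixed x).mpr fun τ => ?_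
    rcases eq_or_ne τ 1 with rfl | hτ
    · rfl
    · rwa [hσ τ hτ]

section Descent

variable {ι K L : Type*} [Field K] [Field L] [Algebra K L] {F : MvPolynomial ι K}

theorem exists_ne_zero_eval_eq_zero_of_forall_apply_eq_mul (σ : L ≃ₐ[K] L)
    (hσ : ∀ x, σ x = x → x ∈ Set.range (algebraMap K L)) {n : ℕ} (hF : F.IsHomogeneous n)
    {u : ι → L} (hu : u ≠ 0) {μ : L} (hσu : ∀ j, σ (u j) = μ * u j) (huF : aeval u F = 0) :
    ∃ a : ι → K, a ≠ 0 ∧ eval a F = 0 := by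
  obtain ⟨i, hi⟩ := Function.ne_iff.mp hu
  have hμ : μ ≠ 0 := by
    rintro rfl
    exact hi (by simpa using hσu i)
  have hfix (j : ι) : σ ((u i)⁻¹ * u j) = (u i)⁻¹ * u j := by
    rw [map_mul, map_inv₀, hσu, hσu]
    field_simp
  choose c hc using fun j => hσ _ (hfix j)
  refine ⟨c, fun hc0 => ?_, (algebraMap K L).injective ?_⟩
  · have := hc i
    rw [hc0, Pi.zero_apply, map_zero, inv_mul_cancel₀ hi] at this
    exact zero_ne_one this
  · have hcu : (fun j => algebraMap K L (c j)) = (u i)⁻¹ • u := funext hc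
    rw [map_zero, eval, coe_eval₂Hom, eval₂_comp_left, RingHom.comp_id, ← aeval_def,
      Function.comp_def, hcu, hF.aeval_smul, huF, mul_zero]

theorem exists_ne_zero_forall_apply_eq_mul_aeval_eq_zero (σ : L ≃ₐ[K] L) (hσ1 : σ ≠ 1)
    (hσσ : ∀ x, σ (σ x) = x) (hF : F.IsHomogeneous 3) {a : ι → L} (ha : a ≠ 0)
    (haF : aeval a F = 0) :
    ∃ u : ι → L, u ≠ 0 ∧ ∃ μ : L, (∀ j, σ (u j) = μ * u j) ∧ aeval u F = 0 := by
  have hconj (x : ι → L) : σ (aeval x F) = aeval (fun j => σ (x j)) F :=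
    comp_aeval_apply (f := x) (σ : L →ₐ[K] L) F
  set b : ι → L := fun j => σ (a j)
  have hbF : aeval b F = 0 := by rw [← hconj, haF, map_zero]
  obtain ⟨c₁, c₂, hc⟩ := hF.exists_aeval_smul_add_smul_eq haF hbF
  have hc₂ : σ c₁ = c₂ := by
    refine σ.apply_eq_of_forall_apply_mul_eq hσ1 fun y => ?_
    have hline : (fun j => σ (((1 : L) • a + y • b) j)) = σ y • a + (1 : L) • b := by
      funext j
      simp [b, hσσ, add_comm]
    have := hconj ((1 : L) • a + y • b)
    rw [hline, hc, hc] at this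
    simpa using this
  obtain ⟨s, hs, hsfix⟩ := σ.exists_ne_zero_apply_mul_eq hσσ c₁
  have hσs : σ s ≠ 0 := by simpa using hs
  by_cases hw : s • a - σ s • b = 0
  · refine ⟨a, ha, s / σ s, fun j => ?_, haF⟩
    have := congrFun hw j
    simp only [Pi.sub_apply, Pi.smul_apply, smul_eq_mul, Pi.zero_apply] at this
    field_simp
    linear_combination -this
  · refine ⟨_, hw, -1, fun j => ?_, ?_⟩
    · simp only [Pi.sub_apply, Pi.smul_apply, smul_eq_mul, map_sub, map_mul, hσσ, b]
      ring
    · rw [sub_eq_add_neg, ← neg_smul, hc, ← hc₂, ← hsfix, map_mul]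
      ring

end Descent

theorem cubic_form_zero_descends_quadratic_extension_general
    (K L : Type) [Field K] [Field L] [Algebra K L] [IsGalois K L]
    (hdeg : Module.finrank K L = 2)
    (m : ℕ)
    (F : MvPolynomial (Fin (m + 1)) K) (hF : F.IsHomogeneous 3)
    (hzero : ∃ a : Fin (m + 1) → L, a ≠ 0 ∧
      eval a (MvPolynomial.map (algebraMap K L) F) = 0) :
    ∃ a : Fin (m + 1) → K, a ≠ 0 ∧ eval a F = 0 := by
  obtain ⟨a, ha, haF⟩ := hzero
  rw [eval_map, ← aeval_def] at haF
  obtain ⟨σ, hσ1, hσσ, hσK⟩ := IsGalois.exists_involution_of_finrank_eq_two hdeg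
  obtain ⟨u, hu, μ, hσu, huF⟩ :=
    exists_ne_zero_forall_apply_eq_mul_aeval_eq_zero σ hσ1 hσσ hF ha haF
  exact exists_ne_zero_eval_eq_zero_of_forall_apply_eq_mul σ hσK hF hu hσu huF

/-- A cubic form over a field `K` with a nontrivial zero over a quadratic
Galois extension `L` of `K` has a nontrivial zero over `K`. -/
theorem cubic_form_zero_descends_quadratic_extension
    (K L : Type) [Field K] [Field L] [Algebra K L] [IsGalois K L]
    (hdeg : Module.finrank K L = 2)
    (m : ℕ) (hm : 1 ≤ m)
    (F : MvPolynomial (Fin (m + 1)) K) (hF : F.IsHomogeneous 3)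
    (hzero : ∃ a : Fin (m + 1) → L, a ≠ 0 ∧
      eval a (MvPolynomial.map (algebraMap K L) F) = 0) :
    ∃ a : Fin (m + 1) → K, a ≠ 0 ∧ eval a F = 0 :=
  cubic_form_zero_descends_quadratic_extension_general K L hdeg m F hF hzero
end

section
/- Let K be a field of characteristic different from 2, L/K a Galois field extension of degree 3, and q a nondegenerate quadratic form in n+1 ≥ 3 variables over K (so that {q = 0} ⊂ P^n is a smooth quadric hypersurface of positive dimension). If q has a nontrivial zero in L^{n+1}, then q has a nontrivial zero in K^{n+1}. -/
/-!
Springer's argument, for a cubic extension. Any `θ ∈ L \ K` generates `L`, since `[L : K] = 3` is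
prime, so a zero of `q` over `L` is `f(θ)` for a vector `f` of polynomials of degree `≤ 2`, and the
cubic `p = minpoly θ` divides `F = q(f(X))`, of degree `≤ 4`. If the vector of degree-`e` coefficients
of `f` (with `e` a degree bound for `f`) is not a zero of `q`, then `deg F = 2e ≥ 3`; so `e = 2` and
`F = p · (linear)` has a root `t ∈ K`. Then `f(t)` is a zero of `q`, unless `f(t) = 0`, in which case
`X - t` divides `f` and the quotient is a vector of smaller degree to which the same applies.
-/

open MvPolynomial Polynomial

namespace Polynomial
variable {K : Type*} [Field K]

theorem exists_isRoot_of_dvd_of_natDegree_eq_succ {p F : K[X]} (hF : F ≠ 0) (hpF : p ∣ F)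
    (hdeg : F.natDegree = p.natDegree + 1) : ∃ t, F.IsRoot t := by
  obtain ⟨G, rfl⟩ := hpF
  rw [natDegree_mul (left_ne_zero_of_mul hF) (right_ne_zero_of_mul hF)] at hdeg
  obtain ⟨t, ht⟩ := exists_root_of_degree_eq_one (p := G) <|
    (degree_eq_iff_natDegree_eq_of_pos one_pos).mpr (by omega)
  exact ⟨t, root_mul_left_of_isRoot p ht⟩

theorem _root_.Irreducible.dvd_of_dvd_X_sub_C_pow_mul {p H : K[X]} (hp : Irreducible p)
    (hp1 : 1 < p.natDegree) {t : K} {k : ℕ} (h : p ∣ (X - C t) ^ k * H) : p ∣ H := by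
  have hcop : IsCoprime p (X - C t) := hp.coprime_iff_not_dvd.mpr fun hd => by
    have := natDegree_le_of_dvd hd (X_sub_C_ne_zero t)
    rw [natDegree_X_sub_C] at this
    omega
  exact hcop.pow_right.dvd_of_dvd_mul_left h

variable {R : Type*} [CommSemiring R] in
theorem coeff_prod_pow_of_natDegree_le {ι : Type*} (s : Finset ι) (f : ι → R[X])
    (m : ι → ℕ) {e : ℕ} (hf : ∀ i ∈ s, (f i).natDegree ≤ e) :
    (∏ i ∈ s, f i ^ m i).coeff ((∑ i ∈ s, m i) * e) = ∏ i ∈ s, (f i).coeff e ^ m i := by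
  induction s using Finset.cons_induction with
  | empty => simp
  | cons a s ha ih =>
    rw [Finset.forall_mem_cons] at hf
    rw [Finset.prod_cons, Finset.sum_cons, add_mul,
      coeff_mul_add_eq_of_natDegree_le (natDegree_pow_le_of_le _ hf.1)
        ((natDegree_prod_le _ _).trans ?_),
      coeff_pow_of_natDegree_le hf.1, ih hf.2, Finset.prod_cons]
    rw [Finset.sum_mul]
    exact Finset.sum_le_sum fun i hi => natDegree_pow_le_of_le _ (hf.2 i hi)

end Polynomial

namespace MvPolynomial

theorem polynomial_eval_aeval {R σ : Type*} [CommSemiring R] (q : MvPolynomial σ R)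
    (f : σ → R[X]) (t : R) : (aeval f q).eval t = eval (fun i => (f i).eval t) q := by
  simpa [Polynomial.coe_aeval_eq_eval, coe_aeval_eq_eval] using
    comp_aeval_apply (Polynomial.aeval t) q (f := f)

namespace IsHomogeneous

variable {R σ : Type*} [CommSemiring R] [Fintype σ] {q : MvPolynomial σ R} {d : ℕ}

theorem sum_eq_of_mem_support (hq : q.IsHomogeneous d) {m : σ →₀ ℕ} (hm : m ∈ q.support) :
    ∑ i, m i = d := by
  rw [← Finsupp.degree_eq_sum, Finsupp.degree_apply, hq.degree_eq_sum_deg_support hm]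

theorem natDegree_aeval_le (hq : q.IsHomogeneous d) {f : σ → R[X]} {e : ℕ}
    (hf : ∀ i, (f i).natDegree ≤ e) : (MvPolynomial.aeval f q).natDegree ≤ d * e := by
  rw [aeval_def, eval₂_eq']
  refine natDegree_sum_le_of_forall_le _ _ fun m hm => ?_
  refine natDegree_C_mul_le _ _ |>.trans <| (natDegree_prod_le _ _).trans ?_
  rw [← hq.sum_eq_of_mem_support hm, Finset.sum_mul]
  exact Finset.sum_le_sum fun i _ => natDegree_pow_le_of_le _ (hf i)

theorem coeff_aeval_eq_eval_coeff (hq : q.IsHomogeneous d) {f : σ → R[X]} {e : ℕ}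
    (hf : ∀ i, (f i).natDegree ≤ e) :
    (MvPolynomial.aeval f q).coeff (d * e) = eval (fun i => (f i).coeff e) q := by
  rw [aeval_def, eval₂_eq', eval_eq', finsetSum_coeff]
  refine Finset.sum_congr rfl fun m hm => ?_
  rw [Polynomial.algebraMap_eq, Polynomial.coeff_C_mul, ← hq.sum_eq_of_mem_support hm,
    coeff_prod_pow_of_natDegree_le _ _ _ fun i _ => hf i]

theorem aeval_mul_left {S : Type*} [CommSemiring S] [Algebra R S] (hq : q.IsHomogeneous d)
    (r : S) (h : σ → S) :
    MvPolynomial.aeval (fun i => r * h i) q = r ^ d * MvPolynomial.aeval h q := by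
  rw [aeval_def, aeval_def, eval₂_eq', eval₂_eq', Finset.mul_sum]
  refine Finset.sum_congr rfl fun m hm => ?_
  rw [← hq.sum_eq_of_mem_support hm]
  simp only [mul_pow, Finset.prod_mul_distrib, Finset.prod_pow_eq_pow_sum]
  ring

end IsHomogeneous

end MvPolynomial

theorem exists_ne_zero_eval_eq_zero_of_dvd_aeval {K σ : Type*} [Field K] [Fintype σ] {p : K[X]}
    {q : MvPolynomial σ K} (hp : Irreducible p) (hp3 : p.natDegree = 3)
    (hq : q.IsHomogeneous 2) {e : ℕ} (he : e ≤ 2) {f : σ → K[X]} (hf0 : f ≠ 0)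
    (hfe : ∀ i, (f i).natDegree ≤ e) (hpf : p ∣ aeval f q) :
    ∃ a : σ → K, a ≠ 0 ∧ eval a q = 0 := by
  induction e using Nat.strong_induction_on generalizing f with
  | _ e ih =>
  set c : σ → K := fun i => (f i).coeff e
  by_cases hc : c = 0
  · obtain _ | e := e
    · refine absurd ?_ hf0
      funext i
      rw [eq_C_of_natDegree_le_zero (hfe i), show (f i).coeff 0 = 0 from congrFun hc i, map_zero,
        Pi.zero_apply]
    · exact ih e (by omega) (by omega) hf0
        (fun i => natDegree_le_pred (hfe i) (congrFun hc i)) hpf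
  by_cases hqc : eval c q = 0
  · exact ⟨c, hc, hqc⟩
  have hF : (aeval f q).natDegree = 2 * e :=
    natDegree_eq_of_le_of_coeff_ne_zero (hq.natDegree_aeval_le hfe)
      (by rwa [hq.coeff_aeval_eq_eval_coeff hfe])
  have hF0 : aeval f q ≠ 0 := fun hF0 =>
    hqc (by rw [← hq.coeff_aeval_eq_eval_coeff hfe, hF0, Polynomial.coeff_zero])
  have he2 : e = 2 := by
    have := natDegree_le_of_dvd hpf hF0
    omega
  subst he2
  obtain ⟨t, ht⟩ := exists_isRoot_of_dvd_of_natDegree_eq_succ hF0 hpf (by omega)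
  by_cases hb : (fun i => (f i).eval t) = 0
  · set h := fun i => f i /ₘ (Polynomial.X - Polynomial.C t)
    have hfh : f = fun i => (Polynomial.X - Polynomial.C t) * h i := by
      funext i
      exact (mul_divByMonic_eq_iff_isRoot.mpr (congrFun hb i)).symm
    have hh0 : h ≠ 0 := fun h0 => hf0 (by rw [hfh, h0]; funext i; simp)
    have hhe : ∀ i, (h i).natDegree ≤ 1 := fun i => by
      have := hfe i
      rw [natDegree_divByMonic (f i) (monic_X_sub_C t), natDegree_X_sub_C]
      omega
    rw [hfh, hq.aeval_mul_left] at hpf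
    exact ih 1 (by omega) (by omega) hh0 hhe (hp.dvd_of_dvd_X_sub_C_pow_mul (by omega) hpf)
  · exact ⟨_, hb, by rw [← polynomial_eval_aeval]; exact ht⟩

theorem nonempty_powerBasis_of_finrank_prime {K L : Type*} [Field K] [Field L] [Algebra K L]
    (h : (Module.finrank K L).Prime) : Nonempty (PowerBasis K L) := by
  have : FiniteDimensional K L := Module.finite_of_finrank_pos h.pos
  have := Subalgebra.isSimpleOrder_of_finrank_prime K L h
  obtain ⟨θ, -, hθ⟩ := SetLike.exists_of_lt (bot_lt_top : (⊥ : Subalgebra K L) < ⊤)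
  have htop : Algebra.adjoin K {θ} = ⊤ := (eq_bot_or_eq_top _).resolve_left fun hbot =>
    hθ (hbot ▸ Algebra.subset_adjoin rfl)
  exact ⟨PowerBasis.ofAdjoinEqTop (IsIntegral.of_finite K θ) htop⟩

theorem quadratic_form_zero_descends_cubic_extension_general
    (K L : Type) [Field K] [Field L] [Algebra K L]
    (hdeg : Module.finrank K L = 3)
    (n : ℕ)
    (q : MvPolynomial (Fin (n + 1)) K) (hq : q.IsHomogeneous 2)
    (hzero : ∃ a : Fin (n + 1) → L, a ≠ 0 ∧
      eval a (MvPolynomial.map (algebraMap K L) q) = 0) :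
    ∃ a : Fin (n + 1) → K, a ≠ 0 ∧ eval a q = 0 := by
  obtain ⟨a, ha0, haq⟩ := hzero
  obtain ⟨pb⟩ := nonempty_powerBasis_of_finrank_prime (hdeg ▸ Nat.prime_three)
  have hdim : pb.dim = 3 := pb.finrank ▸ hdeg
  choose f hfdeg hfa using fun i => pb.exists_eq_aeval (a i)
  refine exists_ne_zero_eval_eq_zero_of_dvd_aeval (minpoly.irreducible pb.isIntegral_gen)
    (pb.natDegree_minpoly.trans hdim) hq le_rfl (f := f) ?_ (fun i => by have := hfdeg i; omega)
    (minpoly.dvd K _ ?_)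
  · rintro rfl
    exact ha0 (by funext i; simp [hfa])
  · rw [comp_aeval_apply, ← haq, MvPolynomial.eval_map, ← MvPolynomial.aeval_def]
    simp only [← hfa]

/-- Over a field `K` of characteristic different from `2`, a nondegenerate
quadratic form in `n + 1 ≥ 3` variables with a nontrivial zero over a cubic Galois extension
`L` of `K` has a nontrivial zero over `K`.  (Nondegeneracy, in characteristic `≠ 2`, is
expressed by saying that the only vector at which all partial derivatives of `q` vanish is
the zero vector.) -/
theorem quadratic_form_zero_descends_cubic_extension
    (K L : Type) [Field K] [Field L] [Algebra K L] [IsGalois K L]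
    (hchar : ringChar K ≠ 2)
    (hdeg : Module.finrank K L = 3)
    (n : ℕ) (hn : 2 ≤ n)
    (q : MvPolynomial (Fin (n + 1)) K) (hq : q.IsHomogeneous 2)
    (hnd : ∀ a : Fin (n + 1) → K, (∀ i, eval a (pderiv i q) = 0) → a = 0)
    (hzero : ∃ a : Fin (n + 1) → L, a ≠ 0 ∧
      eval a (MvPolynomial.map (algebraMap K L) q) = 0) :
    ∃ a : Fin (n + 1) → K, a ≠ 0 ∧ eval a q = 0 :=
  quadratic_form_zero_descends_cubic_extension_general K L hdeg n q hq hzero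
end
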